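/- arXiv:2403.00532 — 4 statements merged into one kernel-verified Lean document; each statement's English description precedes it below -/
import Mathlib

section
/- For the two-bang evolution operator Û = exp(-i(Δσz - uσx)t₂/2)·exp(-i(Δσz + uσx)t₁/2), the transition probability |⟨↓|Û|↑⟩|² equals (u²/Ω⁴)[4Δ² sin²(Ωt₁/2) sin²(Ωt₂/2) + Ω² sin²(Ω(t₁-t₂)/2)], where Ω = √(Δ² + u²). -/
open Matrix Complex

noncomputable def σx : Matrix (Fin 2) (Fin 2) ℂ := !![0, 1; 1, 0]
noncomputable def σz : Matrix (Fin 2) (Fin 2) ℂ := !![1, 0; 0, -1]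

noncomputable def up : Fin 2 → ℂ := ![1, 0]
noncomputable def down : Fin 2 → ℂ := ![0, 1]

/-!
Both generators `Δ σz ± u σx` square to `Ω² · 1`, so the exponential series splits into its even
and odd parts and each factor is the rotation `cos (Ωt/2) - i sin (Ωt/2) / Ω · H`. Multiplying the
two rotations out, the amplitude `⟨↓|Û|↑⟩` has real part `2Δu sin (Ωt₁/2) sin (Ωt₂/2) / Ω²` and
imaginary part `-(u/Ω) sin (Ω(t₁ - t₂)/2)`; the sum of their squares is the claimed probability.
-/

section ExpOfSquareScalar

variable {𝔸 : Type*} [Ring 𝔸] [Algebra ℂ 𝔸] [TopologicalSpace 𝔸] [IsTopologicalRing 𝔸]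
  [ContinuousSMul ℂ 𝔸] [T2Space 𝔸]

theorem exp_smul_of_mul_self_eq {A : 𝔸} {ω : ℂ} (hω : ω ≠ 0) (hA : A * A = ω ^ 2 • 1) (c : ℂ) :
    NormedSpace.exp (c • A) = cosh (c * ω) • (1 : 𝔸) + (sinh (c * ω) / ω) • A := by
  have hsq : (c • A) * (c • A) = (c * ω) ^ 2 • (1 : 𝔸) := by
    rw [smul_mul_smul, hA, smul_smul, mul_pow, sq c]
  have heven (k : ℕ) : (c • A) ^ (2 * k) = (c * ω) ^ (2 * k) • (1 : 𝔸) := by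
    rw [pow_mul, sq, hsq, smul_pow, one_pow, ← pow_mul]
  have hodd (k : ℕ) : (c • A) ^ (2 * k + 1) = ((c * ω) ^ (2 * k + 1) / ω) • A := by
    rw [pow_succ, heven, smul_mul_smul, one_mul, pow_succ, mul_div_assoc,
      mul_div_cancel_right₀ _ hω]
  rw [NormedSpace.exp_eq_tsum ℂ]
  refine HasSum.tsum_eq (HasSum.even_add_odd ?_ ?_)
  · convert (hasSum_cosh (c * ω)).smul_const (1 : 𝔸) using 2 with k
    rw [heven, smul_smul, div_eq_inv_mul]
  · convert ((hasSum_sinh (c * ω)).div_const ω).smul_const A using 2 with k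
    rw [hodd, smul_smul]
    congr 1
    ring

theorem exp_neg_I_smul_of_mul_self_eq {A : 𝔸} {ω : ℂ} (hω : ω ≠ 0) (hA : A * A = ω ^ 2 • 1)
    (θ : ℂ) :
    NormedSpace.exp ((-I * θ) • A) = cos (θ * ω) • (1 : 𝔸) - (I * sin (θ * ω) / ω) • A := by
  have h : -I * θ * ω = -(θ * ω * I) := by ring
  rw [exp_smul_of_mul_self_eq hω hA, h, cosh_neg, sinh_neg, cosh_mul_I, sinh_mul_I,
    sub_eq_add_neg, ← neg_smul]
  ring_nf

end ExpOfSquareScalar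

theorem pauli_combination_eq (a b : ℂ) : a • σz + b • σx = !![a, b; b, -a] := by
  simp [σz, σx]

theorem pauli_combination_mul_self (a b : ℂ) :
    (a • σz + b • σx) * (a • σz + b • σx) = (a ^ 2 + b ^ 2) • 1 := by
  rw [pauli_combination_eq, mul_fin_two, one_fin_two, smul_of]
  congr 1
  simp only [mul_neg, smul_cons, smul_eq_mul, mul_one, mul_zero, smul_empty, vecCons_inj, and_true]
  refine ⟨⟨?_, ?_⟩, ?_, ?_⟩ <;> ring

theorem star_down_dotProduct_mulVec_up (M : Matrix (Fin 2) (Fin 2) ℂ) :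
    star down ⬝ᵥ M *ᵥ up = M 1 0 := by
  simp [down, up, dotProduct, mulVec, Fin.sum_univ_two]

theorem two_bang_matrix_entry (Δ u Ω c₁ s₁ c₂ s₂ : ℂ) :
    ((c₂ • 1 - (I * s₂ / Ω) • (Δ • σz - u • σx)) *
        (c₁ • 1 - (I * s₁ / Ω) • (Δ • σz + u • σx))) 1 0
      = 2 * Δ * u * s₁ * s₂ / Ω ^ 2 + I * u * (s₂ * c₁ - c₂ * s₁) / Ω := by
  simp only [σx, σz, Matrix.mul_apply, Fin.sum_univ_two, Matrix.sub_apply, Matrix.add_apply,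
    Matrix.smul_apply, one_apply_eq, one_apply_ne one_ne_zero, of_apply, cons_val_zero,
    cons_val_one, cons_val_fin_one, smul_eq_mul]
  linear_combination (-2 * Δ * u * s₁ * s₂ / Ω ^ 2) * I_sq

theorem two_bang_amplitude (Δ u Ω t₁ t₂ : ℝ) (hΩ : Ω ^ 2 = Δ ^ 2 + u ^ 2) (hΩ₀ : Ω ≠ 0) :
    star down ⬝ᵥ
      ((NormedSpace.exp ((-I * t₂ / 2) • ((Δ : ℂ) • σz - (u : ℂ) • σx)) *
        NormedSpace.exp ((-I * t₁ / 2) • ((Δ : ℂ) • σz + (u : ℂ) • σx)))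
        *ᵥ up)
      = ((2 * Δ * u * Real.sin (Ω * t₁ / 2) * Real.sin (Ω * t₂ / 2) / Ω ^ 2 : ℝ) : ℂ)
        + ((-(u / Ω) * Real.sin (Ω * (t₁ - t₂) / 2) : ℝ) : ℂ) * I := by
  have hΩC : (Ω : ℂ) ^ 2 = (Δ : ℂ) ^ 2 + (u : ℂ) ^ 2 := mod_cast hΩ
  have hΩC₀ : (Ω : ℂ) ≠ 0 := ofReal_ne_zero.2 hΩ₀
  have hA : ((Δ : ℂ) • σz + (u : ℂ) • σx) * ((Δ : ℂ) • σz + (u : ℂ) • σx) = (Ω : ℂ) ^ 2 • 1 := by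
    rw [hΩC, pauli_combination_mul_self]
  have hB : ((Δ : ℂ) • σz - (u : ℂ) • σx) * ((Δ : ℂ) • σz - (u : ℂ) • σx) = (Ω : ℂ) ^ 2 • 1 := by
    rw [hΩC, ← neg_sq (u : ℂ), sub_eq_add_neg, ← neg_smul, pauli_combination_mul_self]
  have hcos (t : ℝ) : cos (t / 2 * Ω) = (Real.cos (Ω * t / 2) : ℂ) := by push_cast; ring_nf
  have hsin (t : ℝ) : sin (t / 2 * Ω) = (Real.sin (Ω * t / 2) : ℂ) := by push_cast; ring_nf
  rw [mul_div_assoc, mul_div_assoc, exp_neg_I_smul_of_mul_self_eq hΩC₀ hA,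
    exp_neg_I_smul_of_mul_self_eq hΩC₀ hB, star_down_dotProduct_mulVec_up, two_bang_matrix_entry,
    hcos, hcos, hsin, hsin, mul_sub Ω, sub_div (Ω * t₁), Real.sin_sub]
  push_cast
  ring

theorem two_bang_transition_probability_general
    (Δ u : ℝ) (t₁ t₂ : ℝ)
    (Ω : ℝ) (hΩ : Ω = Real.sqrt (Δ ^ 2 + u ^ 2)) (hΩpos : 0 < Ω) :
    ‖(star down ⬝ᵥ
      ((NormedSpace.exp ((-Complex.I * t₂ / 2) • ((Δ : ℂ) • σz - (u : ℂ) • σx)) *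
        NormedSpace.exp ((-Complex.I * t₁ / 2) • ((Δ : ℂ) • σz + (u : ℂ) • σx)))
        *ᵥ up))‖ ^ 2
      = u ^ 2 / Ω ^ 4 *
          (4 * Δ ^ 2 * Real.sin (Ω * t₁ / 2) ^ 2 * Real.sin (Ω * t₂ / 2) ^ 2
            + Ω ^ 2 * Real.sin (Ω * (t₁ - t₂) / 2) ^ 2) := by
  have hΩsq : Ω ^ 2 = Δ ^ 2 + u ^ 2 := by rw [hΩ, Real.sq_sqrt (by positivity)]
  rw [two_bang_amplitude Δ u Ω t₁ t₂ hΩsq hΩpos.ne', Complex.sq_norm, normSq_add_mul_I]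
  field_simp
  ring

/-- For Û = exp(-i(Δσz - uσx)t₂/2)·exp(-i(Δσz + uσx)t₁/2), the transition
probability |⟨↓|Û|↑⟩|² equals
(u²/Ω⁴)[4Δ² sin²(Ωt₁/2) sin²(Ωt₂/2) + Ω² sin²(Ω(t₁-t₂)/2)], Ω = √(Δ² + u²). -/
theorem two_bang_transition_probability
    (Δ u : ℝ) (t₁ t₂ : ℝ) (ht₁ : 0 ≤ t₁) (ht₂ : 0 ≤ t₂)
    (Ω : ℝ) (hΩ : Ω = Real.sqrt (Δ ^ 2 + u ^ 2)) (hΩpos : 0 < Ω) :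
    ‖(star down ⬝ᵥ
      ((NormedSpace.exp ((-Complex.I * t₂ / 2) • ((Δ : ℂ) • σz - (u : ℂ) • σx)) *
        NormedSpace.exp ((-Complex.I * t₁ / 2) • ((Δ : ℂ) • σz + (u : ℂ) • σx)))
        *ᵥ up))‖ ^ 2
      = u ^ 2 / Ω ^ 4 *
          (4 * Δ ^ 2 * Real.sin (Ω * t₁ / 2) ^ 2 * Real.sin (Ω * t₂ / 2) ^ 2
            + Ω ^ 2 * Real.sin (Ω * (t₁ - t₂) / 2) ^ 2) :=
  two_bang_transition_probability_general Δ u t₁ t₂ Ω hΩ hΩpos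
end

section
/- With |Δ| < u₀ and Ω = √(Δ² + u₀²), the choice t₁ = (π - arccos(Δ²/u₀²))/Ω and t₂ = (π + arccos(Δ²/u₀²))/Ω gives |⟨↓|exp(-i(Δσz - u₀σx)t₂/2)·exp(-i(Δσz + u₀σx)t₁/2)|↑⟩|² = 1, with total time t₁ + t₂ = 2π/Ω. -/
/-!
Both Hamiltonians are `Ω (a σz ± b σx)` with `a = Δ/Ω`, `b = u₀/Ω`, `a² + b² = 1`. A unit
Pauli combination squares to `1`, so each propagator is `cos θ - i sin θ (a σz ± b σx)` with
`θ = Ω t / 2`, and the `↓↑` amplitude of the product is `2ab sin θ₁ sin θ₂ + i b sin (θ₂ - θ₁)`.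
At `θ₁,₂ = π/2 ∓ α/2` this is `ab (1 + cos α) + i b sin α`, of squared modulus
`b² (1 + cos α) (a² (1 + cos α) + 1 - cos α)`; the choice `cos α = Δ²/u₀² = a²/b²` gives
`b² (1 + cos α) = 1` and `a² (1 + cos α) = cos α`, hence modulus `1`.
-/

open Matrix Complex

theorem exp_smul_eq_cosh_add_sinh_of_mul_self_eq_one {𝔸 : Type*} [Ring 𝔸] [Algebra ℂ 𝔸]
    [TopologicalSpace 𝔸] [IsTopologicalRing 𝔸] [ContinuousSMul ℂ 𝔸] [T2Space 𝔸]
    {a : 𝔸} (ha : a * a = 1) (z : ℂ) :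
    NormedSpace.exp (z • a) = cosh z • (1 : 𝔸) + sinh z • a := by
  have ha2 : a ^ 2 = 1 := by rw [sq, ha]
  rw [NormedSpace.exp_eq_tsum ℂ]
  refine HasSum.tsum_eq (HasSum.even_add_odd ?_ ?_)
  · convert (hasSum_cosh z).smul_const (1 : 𝔸) using 2 with k
    rw [smul_pow, pow_mul a, ha2, one_pow, smul_smul, inv_mul_eq_div]
  · convert (hasSum_sinh z).smul_const a using 2 with k
    rw [smul_pow, pow_succ a, pow_mul a, ha2, one_pow, one_mul, smul_smul, inv_mul_eq_div]

theorem exp_neg_I_mul_smul_of_mul_self_eq_one {𝔸 : Type*} [Ring 𝔸] [Algebra ℂ 𝔸]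
    [TopologicalSpace 𝔸] [IsTopologicalRing 𝔸] [ContinuousSMul ℂ 𝔸] [T2Space 𝔸]
    {a : 𝔸} (ha : a * a = 1) (θ : ℂ) :
    NormedSpace.exp ((-I * θ) • a) = cos θ • (1 : 𝔸) + (-I * sin θ) • a := by
  rw [exp_smul_eq_cosh_add_sinh_of_mul_self_eq_one ha, show -I * θ = -θ * I by ring,
    cosh_mul_I, sinh_mul_I, cos_neg, sin_neg, neg_mul, mul_comm, ← neg_mul]

noncomputable def pauliXZ (a b : ℝ) : Matrix (Fin 2) (Fin 2) ℂ := (a : ℂ) • σz + (b : ℂ) • σx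

theorem pauliXZ_mul_self (a b : ℝ) :
    pauliXZ a b * pauliXZ a b = ((a ^ 2 + b ^ 2 : ℝ) : ℂ) • 1 := by
  ext i j
  fin_cases i <;> fin_cases j <;>
    simp [pauliXZ, σz, σx, Matrix.mul_apply, Fin.sum_univ_two] <;> ring

theorem exp_pauliXZ {a b : ℝ} (h : a ^ 2 + b ^ 2 = 1) (θ : ℝ) :
    NormedSpace.exp ((-I * θ) • pauliXZ a b) =
      (Real.cos θ : ℂ) • 1 + (-I * Real.sin θ) • pauliXZ a b := by
  have hsq : pauliXZ a b * pauliXZ a b = 1 := by simp [pauliXZ_mul_self, h]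
  rw [exp_neg_I_mul_smul_of_mul_self_eq_one hsq, ofReal_cos, ofReal_sin]

theorem smul_pauliXZ_eq_smul_pauliXZ_div {Ω : ℝ} (hΩ : Ω ≠ 0) (t a b : ℝ) :
    (-I * t / 2) • pauliXZ a b = (-I * (Ω * t / 2 : ℝ)) • pauliXZ (a / Ω) (b / Ω) := by
  have hΩ' : (Ω : ℂ) ≠ 0 := ofReal_ne_zero.mpr hΩ
  simp only [pauliXZ, smul_add, smul_smul]
  push_cast
  congr 2 <;> field_simp

theorem star_down_dotProduct_mulVec_up_s8 (a b θ φ : ℝ) :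
    star down ⬝ᵥ
      ((((Real.cos φ : ℂ) • 1 + (-I * Real.sin φ) • pauliXZ a (-b)) *
        ((Real.cos θ : ℂ) • 1 + (-I * Real.sin θ) • pauliXZ a b)) *ᵥ up) =
      (2 * a * b * Real.sin θ * Real.sin φ : ℝ) + (b * Real.sin (φ - θ) : ℝ) * I := by
  rw [Real.sin_sub]
  simp [pauliXZ, σz, σx, down, up, dotProduct, mulVec, Fin.sum_univ_two, Matrix.mul_apply]
  apply Complex.ext <;> simp <;> ring

theorem sq_add_sq_eq_one_of_sq_mul_cos_eq_sq {a b α : ℝ} (hab : a ^ 2 + b ^ 2 = 1)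
    (hα : b ^ 2 * Real.cos α = a ^ 2) :
    (2 * a * b * Real.cos (α / 2) * Real.cos (α / 2)) ^ 2 + (b * Real.sin α) ^ 2 = 1 := by
  have hsin := Real.sin_sq_add_cos_sq α
  have hhalf : Real.cos (α / 2) ^ 2 = (1 + Real.cos α) / 2 := by rw [Real.cos_sq]; ring_nf
  set c := Real.cos α
  have hb : b ^ 2 * (1 + c) = 1 := by linear_combination hab + hα
  have ha : a ^ 2 * (1 + c) = c := by linear_combination c * hb - (1 + c) * hα
  calc (2 * a * b * Real.cos (α / 2) * Real.cos (α / 2)) ^ 2 + (b * Real.sin α) ^ 2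
      = (a * b * (1 + c)) ^ 2 + b ^ 2 * (1 - c ^ 2) := by
        linear_combination b ^ 2 * hsin
          + 4 * a ^ 2 * b ^ 2 * (Real.cos (α / 2) ^ 2 + (1 + c) / 2) * hhalf
    _ = b ^ 2 * (1 + c) * (a ^ 2 * (1 + c) + 1 - c) := by ring
    _ = 1 := by rw [hb, ha]; ring

/-- With |Δ| < u₀ and Ω = √(Δ² + u₀²), the choice t₁ = (π - arccos(Δ²/u₀²))/Ω,
t₂ = (π + arccos(Δ²/u₀²))/Ω gives a perfect transfer
|⟨↓|exp(-i(Δσz - u₀σx)t₂/2)·exp(-i(Δσz + u₀σx)t₁/2)|↑⟩|² = 1, with total time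
t₁ + t₂ = 2π/Ω. -/
theorem two_bang_optimal_transfer
    (Δ u₀ : ℝ) (hΔ : |Δ| < u₀)
    (Ω : ℝ) (hΩ : Ω = Real.sqrt (Δ ^ 2 + u₀ ^ 2))
    (t₁ t₂ : ℝ)
    (ht₁ : t₁ = (Real.pi - Real.arccos (Δ ^ 2 / u₀ ^ 2)) / Ω)
    (ht₂ : t₂ = (Real.pi + Real.arccos (Δ ^ 2 / u₀ ^ 2)) / Ω) :
    ‖(star down ⬝ᵥ
      ((NormedSpace.exp ((-Complex.I * t₂ / 2) • ((Δ : ℂ) • σz - (u₀ : ℂ) • σx)) *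
        NormedSpace.exp ((-Complex.I * t₁ / 2) • ((Δ : ℂ) • σz + (u₀ : ℂ) • σx)))
        *ᵥ up))‖ ^ 2 = 1
    ∧ t₁ + t₂ = 2 * Real.pi / Ω := by
  have hu₀ : 0 < u₀ := (abs_nonneg Δ).trans_lt hΔ
  have hΩsq : Ω ^ 2 = Δ ^ 2 + u₀ ^ 2 := by rw [hΩ]; exact Real.sq_sqrt (by positivity)
  have hΩ₀ : Ω ≠ 0 := by rw [hΩ]; positivity
  refine ⟨?_, by rw [ht₁, ht₂]; field_simp; ring⟩
  set α := Real.arccos (Δ ^ 2 / u₀ ^ 2)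
  have hab : (Δ / Ω) ^ 2 + (u₀ / Ω) ^ 2 = 1 := by field_simp; linarith
  have hcos : (u₀ / Ω) ^ 2 * Real.cos α = (Δ / Ω) ^ 2 := by
    have hΔu₀ : Δ ^ 2 < u₀ ^ 2 := sq_lt_sq' (neg_lt_of_abs_lt hΔ) (lt_of_abs_lt hΔ)
    rw [Real.cos_arccos (by linarith [div_nonneg (sq_nonneg Δ) (sq_nonneg u₀)])
      ((div_le_one (by positivity)).mpr hΔu₀.le)]
    field_simp
  have hθ₁ : Ω * t₁ / 2 = Real.pi / 2 - α / 2 := by rw [ht₁]; field_simp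
  have hθ₂ : Ω * t₂ / 2 = α / 2 + Real.pi / 2 := by rw [ht₂]; field_simp; ring
  have hH₁ : (Δ : ℂ) • σz + (u₀ : ℂ) • σx = pauliXZ Δ u₀ := rfl
  have hH₂ : (Δ : ℂ) • σz - (u₀ : ℂ) • σx = pauliXZ Δ (-u₀) := by
    simp [pauliXZ, sub_eq_add_neg]
  rw [hH₁, hH₂, smul_pauliXZ_eq_smul_pauliXZ_div hΩ₀, smul_pauliXZ_eq_smul_pauliXZ_div hΩ₀,
    exp_pauliXZ hab, exp_pauliXZ (by rwa [neg_div, neg_sq]), neg_div,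
    star_down_dotProduct_mulVec_up_s8, hθ₁, hθ₂, Real.sin_pi_div_two_sub, Real.sin_add_pi_div_two,
    show α / 2 + Real.pi / 2 - (Real.pi / 2 - α / 2) = α by ring, Complex.sq_norm,
    normSq_add_mul_I]
  exact sq_add_sq_eq_one_of_sq_mul_cos_eq_sq hab hcos
end

section
/- For square matrices A depending smoothly on a parameter θ, the Wilcox formula holds: d/dθ exp(tA) = exp(tA) · ∫₀ᵗ exp(-t'A) (dA/dθ) exp(t'A) dt'. -/
/-!
Differentiating `s ↦ exp ((t - s) • Y) * exp (s • X)` gives Duhamel's formula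
`exp (t • X) - exp (t • Y) = ∫₀ᵗ exp ((t - s) • Y) * (X - Y) * exp (s • X)`. With `X = A + ε • H`,
`Y = A` it writes the difference quotient of the analytic map `M ↦ exp (t • M)` in direction `H`
as an integral depending continuously on `ε`, so its Fréchet derivative at `A` is
`H ↦ ∫₀ᵗ exp ((t - s) • A) * H * exp (s • A)`. The chain rule along `θ ↦ A θ` and
`exp ((t - s) • A) = exp (t • A) * exp (-s • A)` give the formula.
-/

open NormedSpace Filter Topology MeasureTheory

section BanachAlgebra

variable {𝔸 : Type*} [NormedRing 𝔸] [NormedAlgebra ℝ 𝔸] [CompleteSpace 𝔸]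

@[fun_prop]
theorem exp_continuous_of_normedAlgebra_real : Continuous (exp : 𝔸 → 𝔸) :=
  continuous_iff_continuousAt.2 fun X => (exp_analytic (𝕂 := ℝ) X).continuousAt

theorem intervalIntegral.integral_const_mul_of_integrable {f : ℝ → 𝔸} {a b : ℝ}
    (hf : IntervalIntegrable f volume a b) (c : 𝔸) :
    ∫ s in a..b, c * f s = c * ∫ s in a..b, f s :=
  (ContinuousLinearMap.mul ℝ 𝔸 c).intervalIntegral_comp_comm hf

theorem exp_smul_mul_exp_neg_smul (X : 𝔸) (t s : ℝ) :
    exp (t • X) * exp ((-s) • X) = exp ((t - s) • X) := by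
  let +nondep : NormedAlgebra ℚ 𝔸 := .restrictScalars ℚ ℝ 𝔸
  rw [← exp_add_of_commute ((Commute.refl X).smul_left t |>.smul_right (-s)), ← add_smul,
    sub_eq_add_neg]

theorem hasDerivAt_exp_sub_smul_mul_exp_smul (X Y : 𝔸) (t s : ℝ) :
    HasDerivAt (fun s : ℝ => exp ((t - s) • Y) * exp (s • X))
      (exp ((t - s) • Y) * (X - Y) * exp (s • X)) s := by
  have hY : HasDerivAt (fun s : ℝ => exp ((t - s) • Y)) (-(exp ((t - s) • Y) * Y)) s := by
    simpa [Function.comp_def] using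
      (hasDerivAt_exp_smul_const Y (t - s)).scomp s ((hasDerivAt_id s).const_sub t)
  refine (hY.mul (hasDerivAt_exp_smul_const' X s)).congr_deriv ?_
  noncomm_ring

theorem exp_smul_sub_exp_smul (X Y : 𝔸) (t : ℝ) :
    exp (t • X) - exp (t • Y) = ∫ s in (0 : ℝ)..t, exp ((t - s) • Y) * (X - Y) * exp (s • X) := by
  rw [intervalIntegral.integral_eq_sub_of_hasDerivAt
    (fun s _ => hasDerivAt_exp_sub_smul_mul_exp_smul X Y t s)
    (Continuous.intervalIntegrable (by fun_prop) _ _)]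
  simp

theorem differentiable_exp_smul (t : ℝ) : Differentiable ℝ (fun M : 𝔸 => exp (t • M)) :=
  fun M => (exp_analytic (𝕂 := ℝ) (t • M)).differentiableAt.comp M
    (differentiableAt_id.const_smul t)

theorem fderiv_exp_smul_apply (t : ℝ) (X H : 𝔸) :
    fderiv ℝ (fun M : 𝔸 => exp (t • M)) X H =
      ∫ s in (0 : ℝ)..t, exp ((t - s) • X) * H * exp (s • X) := by
  set I : ℝ → 𝔸 := fun ε => ∫ s in (0 : ℝ)..t, exp ((t - s) • X) * H * exp (s • (X + ε • H))
  have hline : HasDerivAt (fun ε : ℝ => exp (t • (X + ε • H)))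
      (fderiv ℝ (fun M : 𝔸 => exp (t • M)) X H) 0 := by
    simpa only [one_smul, Function.comp_def] using
      (differentiable_exp_smul t X).hasFDerivAt.comp_hasDerivAt_of_eq (0 : ℝ)
        (((hasDerivAt_id' (0 : ℝ)).smul_const H).const_add X) (by simp)
  have hslope : ∀ ε ≠ 0, slope (fun ε : ℝ => exp (t • (X + ε • H))) 0 ε = I ε := by
    intro ε hε
    rw [slope_def_module, sub_zero, zero_smul, add_zero, exp_smul_sub_exp_smul,
      ← intervalIntegral.integral_smul]
    simp only [add_sub_cancel_left, mul_smul_comm, smul_mul_assoc, inv_smul_smul₀ hε, I]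
  have hI : Continuous I := by
    apply intervalIntegral.continuous_parametric_intervalIntegral_of_continuous'
    fun_prop
  have hI0 : I 0 = ∫ s in (0 : ℝ)..t, exp ((t - s) • X) * H * exp (s • X) := by simp [I]
  refine tendsto_nhds_unique (hasDerivAt_iff_tendsto_slope.mp hline) ?_
  rw [← hI0]
  exact ((hI.tendsto 0).mono_left nhdsWithin_le_nhds).congr'
    (eventually_nhdsWithin_of_forall fun ε hε => (hslope ε hε).symm)

end BanachAlgebra

attribute [local instance] Matrix.linftyOpNormedAddCommGroup Matrix.linftyOpNormedRing
  Matrix.linftyOpNormedAlgebra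

/-- Wilcox formula: for a matrix A depending differentiably on a parameter θ,
d/dθ exp(tA) = exp(tA) · ∫₀ᵗ exp(-t'A) (dA/dθ) exp(t'A) dt'. -/
theorem wilcox_formula
    {n : ℕ}
    (A : ℝ → Matrix (Fin n) (Fin n) ℂ) (θ₀ : ℝ)
    (A' : Matrix (Fin n) (Fin n) ℂ) (hA : HasDerivAt A A' θ₀) (t : ℝ) :
    HasDerivAt (fun θ => NormedSpace.exp (t • A θ))
      (NormedSpace.exp (t • A θ₀) *
        ∫ t' in (0:ℝ)..t,
          NormedSpace.exp ((-t') • A θ₀) * A' * NormedSpace.exp (t' • A θ₀))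
      θ₀ := by
  refine ((differentiable_exp_smul t (A θ₀)).hasFDerivAt.comp_hasDerivAt θ₀ hA).congr_deriv ?_
  rw [fderiv_exp_smul_apply, ← intervalIntegral.integral_const_mul_of_integrable
    (Continuous.intervalIntegrable (by fun_prop) _ _)]
  refine intervalIntegral.integral_congr fun s _ => ?_
  rw [← mul_assoc, ← mul_assoc]
  -- the `ℝ`-action on matrices here is only defeq to the algebra one, so `rw` misses the pattern
  exact congrArg (· * A' * _) (exp_smul_mul_exp_neg_smul (A θ₀) t s).symm
end

section
/- Let H(u) be an n×n matrix depending differentiably on a real parameter u, and let H̃(u) be the 2n×2n block matrix with H on both diagonal blocks, ∂H/∂u in the lower-left block, and 0 in the upper-right block. Then for any scalar α, exp(αH̃) is the block matrix with exp(αH) on both diagonal blocks, ∂/∂u[exp(αH)] in the lower-left block, and 0 in the upper-right block. -/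
/-!
For `s ≠ 0`, conjugation by the shear `fromBlocks 1 0 (s⁻¹ • 1) 1` takes
`fromBlocks (A + s • B) 0 0 A` to `fromBlocks (A + s • B) 0 B A`, so the lower-left block of
`exp (fromBlocks (A + s • B) 0 B A)` is the difference quotient `s⁻¹ • (exp (A + s • B) - exp A)`.
Letting `s → 0` identifies the lower-left block of `exp (fromBlocks A 0 B A)` with the derivative
of `exp` at `A` in the direction `B`; the chain rule with `A = α • H u`, `B = α • H' u` concludes.
-/

open Matrix

attribute [local instance] Matrix.linftyOpNormedAddCommGroup Matrix.linftyOpNormedRing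
  Matrix.linftyOpNormedAlgebra

open NormedSpace Filter Topology Nat

namespace Matrix

variable {m : Type*} [Fintype m] [DecidableEq m]

def fromBlocksDiagonalRingHom : Matrix m m ℂ × Matrix m m ℂ →+* Matrix (m ⊕ m) (m ⊕ m) ℂ where
  toFun p := fromBlocks p.1 0 0 p.2
  map_one' := fromBlocks_one
  map_mul' p q := by simp [fromBlocks_multiply]
  map_zero' := fromBlocks_zero
  map_add' p q := by simp [fromBlocks_add]

theorem exp_fromBlocks_diagonal (X Y : Matrix m m ℂ) :
    exp (fromBlocks X 0 0 Y) = fromBlocks (exp X) 0 0 (exp Y) := by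
  have hcont : Continuous (fromBlocksDiagonalRingHom (m := m)) :=
    continuous_fst.matrix_fromBlocks continuous_const continuous_const continuous_snd
  have hterm (k : ℕ) : fromBlocksDiagonalRingHom ((k !⁻¹ : ℂ) • X ^ k, (k !⁻¹ : ℂ) • Y ^ k) =
      (k !⁻¹ : ℂ) • fromBlocks X 0 0 Y ^ k := by
    simp [fromBlocksDiagonalRingHom, fromBlocks_diagonal_pow, fromBlocks_smul]
  have h := ((exp_series_hasSum_exp' (𝕂 := ℂ) X).prodMk
    (exp_series_hasSum_exp' (𝕂 := ℂ) Y)).map fromBlocksDiagonalRingHom hcont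
  simp only [Function.comp_def, hterm] at h
  exact (exp_series_hasSum_exp' (𝕂 := ℂ) _).unique h

variable (m) in
def fromBlocksShear (c : ℂ) : (Matrix (m ⊕ m) (m ⊕ m) ℂ)ˣ where
  val := fromBlocks 1 0 (c • 1) 1
  inv := fromBlocks 1 0 (-c • 1) 1
  val_inv := by simp [fromBlocks_multiply, ← fromBlocks_one]
  inv_val := by simp [fromBlocks_multiply, ← fromBlocks_one]

theorem fromBlocksShear_conj (c : ℂ) (X Y : Matrix m m ℂ) :
    (fromBlocksShear m c : Matrix (m ⊕ m) (m ⊕ m) ℂ) * fromBlocks X 0 0 Y *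
        (↑(fromBlocksShear m c)⁻¹ : Matrix (m ⊕ m) (m ⊕ m) ℂ) =
      fromBlocks X 0 (c • (X - Y)) Y := by
  simp [fromBlocksShear, fromBlocks_multiply, sub_eq_add_neg]

theorem exp_fromBlocks_add_smul (A B : Matrix m m ℂ) {s : ℂ} (hs : s ≠ 0) :
    exp (fromBlocks (A + s • B) 0 B A) =
      fromBlocks (exp (A + s • B)) 0 (s⁻¹ • (exp (A + s • B) - exp A)) (exp A) := by
  have hB : s⁻¹ • (A + s • B - A) = B := by
    rw [add_sub_cancel_left, smul_smul, inv_mul_cancel₀ hs, one_smul]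
  have key := congrArg exp (fromBlocksShear_conj s⁻¹ (A + s • B) A)
  rw [exp_units_conj, exp_fromBlocks_diagonal, fromBlocksShear_conj, hB] at key
  exact key.symm

theorem exp_fromBlocks_of_hasDerivAt {A B D : Matrix m m ℂ}
    (hD : HasDerivAt (fun s : ℂ => exp (A + s • B)) D 0) :
    exp (fromBlocks A 0 B A) = fromBlocks (exp A) 0 D (exp A) := by
  -- Matrices carry both the `Pi` topology and module structure and those of the `linfty` norm;
  -- they agree only up to unfolding, hence the explicitly stated limits closed by `exact`.
  have hexp : Tendsto (fun s : ℂ => exp (A + s • B)) (𝓝[≠] 0) (𝓝 (exp A)) := by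
    have h : Tendsto (fun s : ℂ => exp (A + s • B)) (𝓝[≠] 0) (𝓝 (exp (A + (0 : ℂ) • B))) :=
      hD.continuousAt.continuousWithinAt
    rwa [zero_smul, add_zero] at h
  have hslope : Tendsto (fun s : ℂ => s⁻¹ • (exp (A + s • B) - exp A)) (𝓝[≠] 0) (𝓝 D) := by
    have h := hasDerivAt_iff_tendsto_slope_zero.1 hD
    simp only [zero_add, zero_smul, add_zero] at h
    exact h
  have hblocks : Continuous fun p : (Matrix m m ℂ × Matrix m m ℂ) × Matrix m m ℂ =>
      fromBlocks p.1.1 0 p.2 p.1.2 := by fun_prop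
  have hrhs : Tendsto (fun s : ℂ => fromBlocks (exp (A + s • B)) 0
      (s⁻¹ • (exp (A + s • B) - exp A)) (exp A)) (𝓝[≠] 0)
      (𝓝 (fromBlocks (exp A) 0 D (exp A))) :=
    (hblocks.tendsto _).comp ((hexp.prodMk_nhds tendsto_const_nhds).prodMk_nhds hslope)
  have hlhs : Tendsto (fun s : ℂ => exp (fromBlocks (A + s • B) 0 B A)) (𝓝[≠] 0)
      (𝓝 (exp (fromBlocks A 0 B A))) := by
    have h : Tendsto (fun s : ℂ => exp (fromBlocks (A + s • B) 0 B A)) (𝓝[≠] 0)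
        (𝓝 (exp (fromBlocks (A + (0 : ℂ) • B) 0 B A))) :=
      (by fun_prop : Continuous _).continuousAt.continuousWithinAt
    rwa [zero_smul, add_zero] at h
  refine tendsto_nhds_unique (hlhs.congr' ?_) hrhs
  filter_upwards [self_mem_nhdsWithin] with s hs using exp_fromBlocks_add_smul A B hs

theorem exp_fromBlocks_eq_fderiv (A B : Matrix m m ℂ) :
    exp (fromBlocks A 0 B A) = fromBlocks (exp A) 0 (fderiv ℂ exp A B) (exp A) := by
  have hline : HasDerivAt (fun s : ℂ => A + s • B) B 0 :=
    (((hasDerivAt_id (0 : ℂ)).smul_const B).const_add A).congr_deriv (one_smul ℂ B)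
  exact exp_fromBlocks_of_hasDerivAt
    ((exp_analytic A).differentiableAt.hasFDerivAt.comp_hasDerivAt_of_eq 0 hline (by simp))

end Matrix

/-- Auxiliary-matrix trick: if H̃(u) = [[H(u), 0], [∂H/∂u(u), H(u)]], then for
any scalar α, exp(αH̃) = [[exp(αH), 0], [∂/∂u exp(αH), exp(αH)]]. -/
theorem exp_block_matrix_gradient
    {n : ℕ}
    (H : ℝ → Matrix (Fin n) (Fin n) ℂ) (hH : Differentiable ℝ H)
    (α : ℂ) (u : ℝ) :
    NormedSpace.exp
        (α • Matrix.fromBlocks (H u) 0 (deriv H u) (H u)) =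
      Matrix.fromBlocks (NormedSpace.exp (α • H u)) 0
        (deriv (fun v => NormedSpace.exp (α • H v)) u)
        (NormedSpace.exp (α • H u)) := by
  have hexp := ((exp_analytic (𝕂 := ℂ) (α • H u)).differentiableAt.hasFDerivAt).restrictScalars ℝ
  have hsmul : HasDerivAt (fun v => α • H v) (α • deriv H u) u := (hH u).hasDerivAt.const_smul α
  have hchain := hexp.comp_hasDerivAt u hsmul
  have hderiv : deriv (fun v => exp (α • H v)) u = fderiv ℂ exp (α • H u) (α • deriv H u) :=
    hchain.deriv
  rw [hderiv, fromBlocks_smul, smul_zero, exp_fromBlocks_eq_fderiv]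
end
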